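/- Suppose a, b, c are positive and exactly one of them is even. Then every integer N with N ≡ -abc (mod (2abc)²) is not represented over the rationals by the form ax² + by² + cz². -/

import Mathlib

open ZMod NumberTheorySymbols

/-!
A rational representation yields a primitive integer solution of `aX² + bY² + cZ² = ND²`;
say `a = 2u` is the even coefficient. At an odd prime `p ∣ a`, the congruence
`N ≡ -abc (mod p²)` forces `-bc` to be a square mod `p` (reduce the equation mod `p`, and
once more after dividing out `p` if `p ∣ Y, Z`). Hence `J(-bc | u) = J(-ac | b) = J(-ab | c) = 1`.
By quadratic reciprocity the product of these three Jacobi symbols is an explicit sign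
depending only on `u, b, c` mod 8, whereas the equation mod 16, where `N ≡ -abc`, forces
that sign to be `-1`.
-/

def quadraticSign (u v w : ℕ) : ℤ :=
  χ₄ u * χ₄ v * χ₄ w * χ₈ v * χ₈ w * (-1) ^ (u / 2 * (v / 2) + u / 2 * (w / 2) + v / 2 * (w / 2))

theorem quadraticSign_mod_eight (u v w : ℕ) :
    quadraticSign u v w = quadraticSign (u % 8) (v % 8) (w % 8) := by
  have hχ₄ (n : ℕ) : χ₄ (n : ZMod 4) = χ₄ ((n % 8 : ℕ) : ZMod 4) := by
    rw [χ₄_nat_mod_four n, χ₄_nat_mod_four (n % 8), Nat.mod_mod_of_dvd n (by norm_num)]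
  have hhalf (n : ℕ) : n / 2 ≡ n % 8 / 2 [MOD 2] := by unfold Nat.ModEq; omega
  have hexp := (((hhalf u).mul (hhalf v)).add ((hhalf u).mul (hhalf w))).add
    ((hhalf v).mul (hhalf w))
  rw [quadraticSign, quadraticSign, hχ₄ u, hχ₄ v, hχ₄ w, χ₈_nat_mod_eight v, χ₈_nat_mod_eight w,
    neg_one_pow_eq_pow_mod_two, hexp, ← neg_one_pow_eq_pow_mod_two]

theorem jacobiSym_mul_jacobiSym_swap {m n : ℕ} (hm : Odd m) (hn : Odd n) (h : m.Coprime n) :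
    J(m | n) * J(n | m) = (-1) ^ (m / 2 * (n / 2)) := by
  rw [jacobiSym.quadratic_reciprocity hm hn, mul_assoc, ← sq,
    jacobiSym.sq_one (by simpa [Int.gcd_natCast_natCast] using h.symm), mul_one]

theorem jacobiSym_triple_product {u v w : ℕ} (hu : Odd u) (hv : Odd v) (hw : Odd w)
    (huv : u.Coprime v) (huw : u.Coprime w) (hvw : v.Coprime w) :
    J(-(v * w) | u) * J(-(2 * u * w) | v) * J(-(2 * u * v) | w) = quadraticSign u v w := by
  simp only [jacobiSym.neg _ hu, jacobiSym.neg _ hv, jacobiSym.neg _ hw, jacobiSym.mul_left,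
    jacobiSym.at_two hv, jacobiSym.at_two hw]
  rw [quadraticSign, pow_add, pow_add, ← jacobiSym_mul_jacobiSym_swap hu hv huv,
    ← jacobiSym_mul_jacobiSym_swap hu hw huw, ← jacobiSym_mul_jacobiSym_swap hv hw hvw]
  ring

/- The congruences mod 8 left by the equation mod 16 when `Y, Z` are odd, resp. when
`Y = 2y, Z = 2z` are even (then `X, D` are odd). -/
theorem quadraticSign_eq_neg_one_of_odd_case :
    ∀ u ∈ ({1, 3, 5, 7} : Finset ℕ), ∀ v ∈ ({1, 3, 5, 7} : Finset ℕ),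
    ∀ w ∈ ({1, 3, 5, 7} : Finset ℕ), ∀ x d : ZMod 8,
      2 * u * x ^ 2 + v + w + 2 * u * v * w * d ^ 2 = 0 → quadraticSign u v w = -1 := by
  decide

theorem quadraticSign_eq_neg_one_of_even_case :
    ∀ u ∈ ({1, 3, 5, 7} : Finset ℕ), ∀ v ∈ ({1, 3, 5, 7} : Finset ℕ),
    ∀ w ∈ ({1, 3, 5, 7} : Finset ℕ), ∀ y z : ZMod 8,
      u + 2 * v * y ^ 2 + 2 * w * z ^ 2 + u * v * w = 0 → quadraticSign u v w = -1 := by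
  decide

theorem intCast_sq_eq_one_of_odd {t : ℤ} (ht : Odd t) : (t : ZMod 8) ^ 2 = 1 := by
  rw [← sub_eq_zero]
  exact_mod_cast (ZMod.intCast_zmod_eq_zero_iff_dvd _ 8).mpr (Int.eight_dvd_sq_sub_one_of_odd ht)

theorem mod_eight_mem_of_odd {n : ℕ} (hn : Odd n) : n % 8 ∈ ({1, 3, 5, 7} : Finset ℕ) := by
  obtain ⟨k, rfl⟩ := hn
  simp only [Finset.mem_insert, Finset.mem_singleton]
  omega

theorem quadraticSign_eq_neg_one {u v w : ℕ} (hu : Odd u) (hv : Odd v) (hw : Odd w)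
    {X Y Z D : ℤ} (hprim : ¬ (2 ∣ X ∧ 2 ∣ Y ∧ 2 ∣ Z ∧ 2 ∣ D))
    (h : 16 ∣ 2 * u * X ^ 2 + v * Y ^ 2 + w * Z ^ 2 + 2 * u * v * w * D ^ 2) :
    quadraticSign u v w = -1 := by
  have hcast (n : ℕ) : ((n % 8 : ℕ) : ZMod 8) = n := ZMod.natCast_mod n 8
  have hpar : Even (2 * u * X ^ 2 + v * Y ^ 2 + w * Z ^ 2 + 2 * u * v * w * D ^ 2) :=
    even_iff_two_dvd.mpr ((by norm_num : (2 : ℤ) ∣ 16).trans h)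
  have hu' := Nat.not_even_iff_odd.mpr hu
  have hv' := Nat.not_even_iff_odd.mpr hv
  have hw' := Nat.not_even_iff_odd.mpr hw
  rw [quadraticSign_mod_eight]
  rcases Int.even_or_odd Y with hY | hY
  · have hZ : Even Z := by
      simpa [hY, hv', hw', parity_simps] using hpar
    obtain ⟨Y, rfl⟩ := hY
    obtain ⟨Z, rfl⟩ := hZ
    have h8 : 8 ∣ u * X ^ 2 + 2 * v * Y ^ 2 + 2 * w * Z ^ 2 + u * v * w * D ^ 2 := by
      rw [show (16 : ℤ) = 2 * 8 by norm_num] at h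
      exact Int.dvd_of_mul_dvd_mul_left two_ne_zero (by convert h using 1; ring)
    have hXD : Even X ↔ Even D := by
      simpa [hu', hv', hw', parity_simps] using
        even_iff_two_dvd.mpr ((by norm_num : (2 : ℤ) ∣ 8).trans h8)
    have hX : Odd X := Int.not_even_iff_odd.mp fun hX => hprim
      ⟨hX.two_dvd, (Even.add_self Y).two_dvd, (Even.add_self Z).two_dvd, (hXD.mp hX).two_dvd⟩
    have hD : Odd D := Int.not_even_iff_odd.mp fun hD => Int.not_even_iff_odd.mpr hX (hXD.mpr hD)
    have h8' := (ZMod.intCast_zmod_eq_zero_iff_dvd _ 8).mpr h8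
    push_cast [intCast_sq_eq_one_of_odd hX, intCast_sq_eq_one_of_odd hD] at h8'
    apply quadraticSign_eq_neg_one_of_even_case _ (mod_eight_mem_of_odd hu) _
      (mod_eight_mem_of_odd hv) _ (mod_eight_mem_of_odd hw) Y Z
    simpa [hcast] using h8'
  · have hZ : Odd Z := Int.not_even_iff_odd.mp <| by
      simpa [Int.not_even_iff_odd.mpr hY, hv', hw', parity_simps] using hpar
    have h8 := (ZMod.intCast_zmod_eq_zero_iff_dvd _ 8).mpr ((by norm_num : (8 : ℤ) ∣ 16).trans h)
    push_cast [intCast_sq_eq_one_of_odd hY, intCast_sq_eq_one_of_odd hZ] at h8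
    apply quadraticSign_eq_neg_one_of_odd_case _ (mod_eight_mem_of_odd hu) _
      (mod_eight_mem_of_odd hv) _ (mod_eight_mem_of_odd hw) X D
    simpa [hcast] using h8

theorem isSquare_neg_mul_of_mul_sq_add_mul_sq {K : Type*} [Field K] {a b x y : K}
    (h : a * x ^ 2 + b * y ^ 2 = 0) (hy : y ≠ 0) : IsSquare (-(a * b)) :=
  ⟨a * x / y, by field_simp; linear_combination (-a) * h⟩

theorem legendreSym_neg_mul_eq_one (p : ℕ) [Fact p.Prime] {A B C N X Y Z D : ℤ}
    (hA : (p : ℤ) ∣ A) (hA2 : ¬ (p : ℤ) ^ 2 ∣ A) (hB : ¬ (p : ℤ) ∣ B) (hC : ¬ (p : ℤ) ∣ C)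
    (hN : (p : ℤ) ^ 2 ∣ N + A * B * C) (heq : A * X ^ 2 + B * Y ^ 2 + C * Z ^ 2 = N * D ^ 2)
    (hprim : ¬ ((p : ℤ) ∣ X ∧ (p : ℤ) ∣ Y ∧ (p : ℤ) ∣ Z ∧ (p : ℤ) ∣ D)) :
    legendreSym p (-(B * C)) = 1 := by
  have hp0 : (p : ℤ) ≠ 0 := by exact_mod_cast (Fact.out : p.Prime).ne_zero
  simp only [← ZMod.intCast_zmod_eq_zero_iff_dvd] at hB hC
  rw [legendreSym.eq_one_iff p (by push_cast; simp [hB, hC])]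
  obtain ⟨A, rfl⟩ := hA
  obtain ⟨N, rfl⟩ : (p : ℤ) ∣ N :=
    (dvd_add_left (dvd_mul_of_dvd_left (dvd_mul_of_dvd_left (dvd_mul_right _ _) _) _)).mp
      ((dvd_pow_self _ two_ne_zero).trans hN)
  have hNA : ((N + A * B * C : ℤ) : ZMod p) = 0 := by
    rw [ZMod.intCast_zmod_eq_zero_iff_dvd, ← mul_dvd_mul_iff_left hp0, ← sq, mul_add]
    simpa only [mul_assoc] using hN
  have hA0 : (A : ZMod p) ≠ 0 := by
    rw [Ne, ZMod.intCast_zmod_eq_zero_iff_dvd]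
    exact fun h => hA2 (by rw [sq]; exact mul_dvd_mul_left _ h)
  have hYZ : (B : ZMod p) * Y ^ 2 + C * Z ^ 2 = 0 := by
    have := congrArg (Int.cast : ℤ → ZMod p) heq
    push_cast [ZMod.natCast_self] at this
    linear_combination this
  by_cases hZ : (Z : ZMod p) = 0
  · have hY : (Y : ZMod p) = 0 := by simpa [hZ, hB] using hYZ
    rw [ZMod.intCast_zmod_eq_zero_iff_dvd] at hY hZ
    obtain ⟨Y, rfl⟩ := hY
    obtain ⟨Z, rfl⟩ := hZ
    have heq' : A * X ^ 2 + p * (B * Y ^ 2 + C * Z ^ 2) = N * D ^ 2 :=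
      mul_left_cancel₀ hp0 (by linear_combination heq)
    have hXD : 1 * (X : ZMod p) ^ 2 + (B * C) * D ^ 2 = 0 := by
      have := congrArg (Int.cast : ℤ → ZMod p) heq'
      push_cast [ZMod.natCast_self] at this hNA
      exact mul_left_cancel₀ hA0 (by linear_combination this + D ^ 2 * hNA)
    have hD : (D : ZMod p) ≠ 0 := by
      intro hD
      have hX : (X : ZMod p) = 0 := by simpa [hD] using hXD
      rw [ZMod.intCast_zmod_eq_zero_iff_dvd] at hX hD
      exact hprim ⟨hX, dvd_mul_right _ _, dvd_mul_right _ _, hD⟩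
    simpa using isSquare_neg_mul_of_mul_sq_add_mul_sq hXD hD
  · simpa using isSquare_neg_mul_of_mul_sq_add_mul_sq hYZ hZ

theorem jacobiSym_eq_one_of_forall_prime_dvd {a : ℤ} {n : ℕ}
    (h : ∀ (p : ℕ) [Fact p.Prime], p ∣ n → legendreSym p a = 1) : J(a | n) = 1 := by
  refine List.prod_eq_one fun x hx => ?_
  obtain ⟨p, hp, rfl⟩ := List.mem_pmap.mp hx
  exact @h p ⟨Nat.prime_of_mem_primeFactorsList hp⟩ (Nat.dvd_of_mem_primeFactorsList hp)

theorem jacobiSym_neg_mul_eq_one {A B C N X Y Z D : ℤ} (hA : Squarefree A)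
    (hAB : IsCoprime A B) (hAC : IsCoprime A C) (hN : A ^ 2 ∣ N + A * B * C)
    (heq : A * X ^ 2 + B * Y ^ 2 + C * Z ^ 2 = N * D ^ 2)
    (hprim : ∀ p : ℕ, p.Prime → ¬ ((p : ℤ) ∣ X ∧ (p : ℤ) ∣ Y ∧ (p : ℤ) ∣ Z ∧ (p : ℤ) ∣ D))
    {n : ℕ} (hn : (n : ℤ) ∣ A) : J(-(B * C) | n) = 1 := by
  refine jacobiSym_eq_one_of_forall_prime_dvd fun p hp hpn => ?_
  have hpA : (p : ℤ) ∣ A := (Int.natCast_dvd_natCast.mpr hpn).trans hn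
  have hunit : ¬ IsUnit (p : ℤ) := (Nat.prime_iff_prime_int.mp hp.out).not_isUnit
  exact legendreSym_neg_mul_eq_one p hpA (fun h => hunit (hA _ (by rwa [← sq])))
    (fun h => hunit (hAB.isUnit_of_dvd' hpA h)) (fun h => hunit (hAC.isUnit_of_dvd' hpA h))
    ((pow_dvd_pow_of_dvd hpA 2).trans hN) heq (hprim p hp.out)

theorem exists_int_solution_of_rat {a b c N : ℤ} {x y z : ℚ}
    (h : (a : ℚ) * x ^ 2 + b * y ^ 2 + c * z ^ 2 = N) :
    ∃ X Y Z D : ℤ, D ≠ 0 ∧ a * X ^ 2 + b * Y ^ 2 + c * Z ^ 2 = N * D ^ 2 := by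
  refine ⟨x.num * (y.den * z.den), y.num * (x.den * z.den), z.num * (x.den * y.den),
    x.den * y.den * z.den, by positivity, ?_⟩
  have hx : (x.num : ℚ) = x * x.den := (Rat.mul_den_eq_num x).symm
  have hy : (y.num : ℚ) = y * y.den := (Rat.mul_den_eq_num y).symm
  have hz : (z.num : ℚ) = z * z.den := (Rat.mul_den_eq_num z).symm
  have : (a : ℚ) * (x.num * (y.den * z.den)) ^ 2 + b * (y.num * (x.den * z.den)) ^ 2
      + c * (z.num * (x.den * y.den)) ^ 2 = N * (x.den * y.den * z.den) ^ 2 := by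
    rw [hx, hy, hz]
    linear_combination ((x.den : ℚ) * y.den * z.den) ^ 2 * h
  exact_mod_cast this

theorem exists_primitive_solution {a b c N X Y Z D : ℤ} (hD : D ≠ 0)
    (h : a * X ^ 2 + b * Y ^ 2 + c * Z ^ 2 = N * D ^ 2) :
    ∃ X Y Z D : ℤ, a * X ^ 2 + b * Y ^ 2 + c * Z ^ 2 = N * D ^ 2 ∧
      ∀ p : ℕ, p.Prime → ¬ ((p : ℤ) ∣ X ∧ (p : ℤ) ∣ Y ∧ (p : ℤ) ∣ Z ∧ (p : ℤ) ∣ D) := by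
  induction hn : D.natAbs using Nat.strong_induction_on generalizing X Y Z D with
  | _ n ih =>
  by_cases hprim : ∀ p : ℕ, p.Prime → ¬ ((p : ℤ) ∣ X ∧ (p : ℤ) ∣ Y ∧ (p : ℤ) ∣ Z ∧ (p : ℤ) ∣ D)
  · exact ⟨X, Y, Z, D, h, hprim⟩
  simp only [not_forall, not_not] at hprim
  obtain ⟨p, hp, ⟨X, rfl⟩, ⟨Y, rfl⟩, ⟨Z, rfl⟩, ⟨D, rfl⟩⟩ := hprim
  have hp0 : (p : ℤ) ≠ 0 := by exact_mod_cast hp.ne_zero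
  have hD0 : D ≠ 0 := right_ne_zero_of_mul hD
  refine ih D.natAbs ?_ (X := X) (Y := Y) (Z := Z) hD0 ?_ rfl
  · rw [← hn, Int.natAbs_mul, Int.natAbs_natCast]
    exact lt_mul_left (Int.natAbs_pos.mpr hD0) hp.one_lt
  · exact mul_left_cancel₀ (pow_ne_zero 2 hp0) (by linear_combination h)

theorem not_exists_primitive_solution_of_even {a b c N X Y Z D : ℤ}
    (hapos : 0 < a) (hbpos : 0 < b) (hcpos : 0 < c)
    (hsa : Squarefree a) (hsb : Squarefree b) (hsc : Squarefree c)
    (hab : IsCoprime a b) (hac : IsCoprime a c) (hbc : IsCoprime b c) (ha : Even a)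
    (hN : (2 * a * b * c) ^ 2 ∣ N + a * b * c)
    (heq : a * X ^ 2 + b * Y ^ 2 + c * Z ^ 2 = N * D ^ 2)
    (hprim : ∀ p : ℕ, p.Prime → ¬ ((p : ℤ) ∣ X ∧ (p : ℤ) ∣ Y ∧ (p : ℤ) ∣ Z ∧ (p : ℤ) ∣ D)) :
    False := by
  have hsqdvd (A B C : ℤ) (h : A * B * C = a * b * c) : A ^ 2 ∣ N + A * B * C := by
    rw [h]
    exact (pow_dvd_pow_of_dvd (Dvd.intro (2 * B * C) (by linear_combination 2 * h)) 2).trans hN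
  lift a to ℕ using hapos.le
  lift b to ℕ using hbpos.le
  lift c to ℕ using hcpos.le
  obtain ⟨u, rfl⟩ := even_iff_two_dvd.mp (Int.even_coe_nat a |>.mp ha)
  rw [Nat.isCoprime_iff_coprime] at hab hac hbc
  have hu : Odd u :=
    Nat.coprime_two_left.mp (Nat.squarefree_mul_iff.mp (Int.squarefree_natCast.mp hsa)).1
  have hv : Odd b := Nat.coprime_two_left.mp (Nat.Coprime.coprime_mul_right hab)
  have hw : Odd c := Nat.coprime_two_left.mp (Nat.Coprime.coprime_mul_right hac)
  have hJu : J(-(b * c) | u) = 1 :=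
    jacobiSym_neg_mul_eq_one hsa (Nat.isCoprime_iff_coprime.mpr hab)
      (Nat.isCoprime_iff_coprime.mpr hac) (hsqdvd _ _ _ rfl) heq hprim
      (Int.natCast_dvd_natCast.mpr (dvd_mul_left u 2))
  have hJv : J(-(2 * u * c) | b) = 1 := by
    simpa using jacobiSym_neg_mul_eq_one (N := N) (X := Y) (Y := X) (Z := Z) (D := D) hsb
      (Nat.isCoprime_iff_coprime.mpr hab.symm) (Nat.isCoprime_iff_coprime.mpr hbc)
      (hsqdvd _ _ _ (by ring)) (by linear_combination heq)
      (fun p hp h => hprim p hp (by tauto)) dvd_rfl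
  have hJw : J(-(2 * u * b) | c) = 1 := by
    simpa using jacobiSym_neg_mul_eq_one (N := N) (X := Z) (Y := X) (Z := Y) (D := D) hsc
      (Nat.isCoprime_iff_coprime.mpr hac.symm) (Nat.isCoprime_iff_coprime.mpr hbc.symm)
      (hsqdvd _ _ _ (by ring)) (by linear_combination heq)
      (fun p hp h => hprim p hp (by tauto)) dvd_rfl
  have h16 : 16 ∣ 2 * u * X ^ 2 + b * Y ^ 2 + c * Z ^ 2 + 2 * u * b * c * D ^ 2 := by
    have h16N : (16 : ℤ) ∣ N + ↑(2 * u) * b * c :=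
      (Dvd.intro ((u * b * c : ℤ) ^ 2) (by push_cast; ring)).trans hN
    have hexpr : 2 * u * X ^ 2 + b * Y ^ 2 + c * Z ^ 2 + 2 * u * b * c * D ^ 2
        = (N + ↑(2 * u) * b * c) * D ^ 2 := by
      push_cast at heq ⊢
      linear_combination heq
    exact hexpr ▸ h16N.mul_right _
  have hsign := jacobiSym_triple_product hu hv hw
    (Nat.Coprime.coprime_mul_left hab) (Nat.Coprime.coprime_mul_left hac) hbc
  rw [hJu, hJv, hJw, quadraticSign_eq_neg_one hu hv hw (by exact_mod_cast hprim 2 Nat.prime_two)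
    h16] at hsign
  norm_num at hsign

theorem stmt5_general (a b c : ℤ)
    (hsa : Squarefree a) (hsb : Squarefree b) (hsc : Squarefree c)
    (hab : IsCoprime a b) (hac : IsCoprime a c) (hbc : IsCoprime b c)
    (hapos : 0 < a) (hbpos : 0 < b) (hcpos : 0 < c)
    (hone : (Even a ∧ Odd b ∧ Odd c) ∨ (Odd a ∧ Even b ∧ Odd c) ∨ (Odd a ∧ Odd b ∧ Even c))
    (N : ℤ) (hN : N ≡ -(a * b * c) [ZMOD (2 * a * b * c) ^ 2]) :
    ¬ ∃ x y z : ℚ, (a : ℚ) * x ^ 2 + (b : ℚ) * y ^ 2 + (c : ℚ) * z ^ 2 = (N : ℚ) := by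
  rintro ⟨x, y, z, h⟩
  obtain ⟨X, Y, Z, D, hD, heq⟩ := exists_int_solution_of_rat h
  obtain ⟨X, Y, Z, D, heq, hprim⟩ := exists_primitive_solution hD heq
  have hN' : (2 * a * b * c) ^ 2 ∣ N + a * b * c := by simpa using hN.symm.dvd
  rcases hone with ⟨ha2, -, -⟩ | ⟨-, hb2, -⟩ | ⟨-, -, hc2⟩
  · exact not_exists_primitive_solution_of_even hapos hbpos hcpos hsa hsb hsc hab hac hbc ha2
      hN' heq hprim
  · exact not_exists_primitive_solution_of_even (N := N) (X := Y) (Y := X) (Z := Z) (D := D)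
      hbpos hapos hcpos hsb hsa hsc hab.symm hbc hac hb2 (by convert hN' using 1 <;> ring)
      (by linear_combination heq) (fun p hp h => hprim p hp (by tauto))
  · exact not_exists_primitive_solution_of_even (N := N) (X := Z) (Y := X) (Z := Y) (D := D)
      hcpos hapos hbpos hsc hsa hsb hac.symm hbc.symm hab hc2 (by convert hN' using 1 <;> ring)
      (by linear_combination heq) (fun p hp h => hprim p hp (by tauto))

theorem stmt5 (a b c : ℤ) (ha : a ≠ 0) (hb : b ≠ 0) (hc : c ≠ 0)
    (hsa : Squarefree a) (hsb : Squarefree b) (hsc : Squarefree c)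
    (hab : IsCoprime a b) (hac : IsCoprime a c) (hbc : IsCoprime b c)
    (hapos : 0 < a) (hbpos : 0 < b) (hcpos : 0 < c)
    (hone : (Even a ∧ Odd b ∧ Odd c) ∨ (Odd a ∧ Even b ∧ Odd c) ∨ (Odd a ∧ Odd b ∧ Even c))
    (N : ℤ) (hN : N ≡ -(a * b * c) [ZMOD (2 * a * b * c) ^ 2]) :
    ¬ ∃ x y z : ℚ, (a : ℚ) * x ^ 2 + (b : ℚ) * y ^ 2 + (c : ℚ) * z ^ 2 = (N : ℚ) :=
  stmt5_general a b c hsa hsb hsc hab hac hbc hapos hbpos hcpos hone N hN
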